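/- Let G be a locally compact second countable Hausdorff topological group acting continuously on a topological space M, and assume that for every nonempty compact subset K ⊆ M the setwise stabiliser G_K = {g ∈ G : g·K = K} is compact. Let 𝔐 be a nonempty G-set equipped with a G-equivariant assignment m ↦ K_m of nonempty compact subsets of M (coupling zones), i.e. K_{g·m} = g·K_m for all g ∈ G and m ∈ 𝔐. Let Σ be a nonempty Hausdorff topological space with a continuous transitive G-action, and suppose that Σ resolves 𝔐. Then the stabiliser subgroup G_s of every point s ∈ Σ is a compact subgroup of G; that is, the quantum reference frame with value space Σ is compactly stabilised. -/

import Mathlib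

open Pointwise

/-!
A point stabiliser in `Σ` is closed, and resolution together with transitivity puts it inside the
stabiliser of some `m ∈ 𝔐`. By equivariance that stabiliser fixes the coupling zone `K_m`
setwise, so it lies in the compact group `G_{K_m}`; a closed subset of a compact set is compact.
-/

namespace MulAction

variable {G : Type*} [Group G]

theorem stabilizer_smul_le_stabilizer_smul {α β : Type*} [MulAction G α] [MulAction G β]
    {a : α} {b : β} (h : stabilizer G a ≤ stabilizer G b) (g : G) :
    stabilizer G (g • a) ≤ stabilizer G (g • b) := by
  rw [stabilizer_smul_eq_stabilizer_map_conj, stabilizer_smul_eq_stabilizer_map_conj]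
  exact Subgroup.map_mono h

theorem stabilizer_le_setStabilizer_of_equivariant {α M : Type*} [MulAction G α] [MulAction G M]
    {K : α → Set M} (hK : ∀ (g : G) (a : α), K (g • a) = g • K a) (a : α) :
    (stabilizer G a : Set G) ⊆ {g : G | g • K a = K a} := fun g hg => by
  rw [SetLike.mem_coe, mem_stabilizer_iff] at hg
  rw [Set.mem_ofPred_eq, ← hK, hg]

theorem isClosed_stabilizer [TopologicalSpace G] {X : Type*} [TopologicalSpace X] [T1Space X]
    [MulAction G X] [ContinuousSMul G X] (x : X) :
    IsClosed (stabilizer G x : Set G) :=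
  isClosed_singleton.preimage (continuous_id.smul continuous_const)

end MulAction

theorem stmt3 {G : Type*} [Group G] [TopologicalSpace G]
    {M : Type*} [TopologicalSpace M] [MulAction G M]
    (hM : ∀ K : Set M, K.Nonempty → IsCompact K → IsCompact {g : G | g • K = K})
    {Mm : Type*} [MulAction G Mm] [Nonempty Mm]
    (Kz : Mm → Set M)
    (hKz : ∀ m : Mm, (Kz m).Nonempty ∧ IsCompact (Kz m))
    (hKzEquiv : ∀ (g : G) (m : Mm), Kz (g • m) = g • Kz m)
    {Sg : Type*} [TopologicalSpace Sg] [T2Space Sg] [MulAction G Sg] [ContinuousSMul G Sg]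
    [MulAction.IsPretransitive G Sg]
    (hresolve : ∀ m : Mm, ∃ s : Sg, ∃ m' ∈ MulAction.orbit G m,
        MulAction.stabilizer G s ≤ MulAction.stabilizer G m') :
    ∀ s : Sg, IsCompact (MulAction.stabilizer G s : Set G) := by
  intro s
  obtain ⟨s₀, m, -, hle⟩ := hresolve (Classical.arbitrary Mm)
  obtain ⟨g, rfl⟩ := MulAction.exists_smul_eq G s₀ s
  have hsub :
      (MulAction.stabilizer G (g • s₀) : Set G) ⊆ {h : G | h • Kz (g • m) = Kz (g • m)} :=
    fun h hh => MulAction.stabilizer_le_setStabilizer_of_equivariant hKzEquiv (g • m)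
      (MulAction.stabilizer_smul_le_stabilizer_smul hle g hh)
  exact (hM _ (hKz _).1 (hKz _).2).of_isClosed_subset (MulAction.isClosed_stabilizer _) hsub
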